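/- arXiv:1009.2695 — 4 statements merged into one kernel-verified Lean document; each statement's English description precedes it below -/
import Mathlib

section
/- Let V be a real inner product space of dimension ≥ 4 with orthogonal almost complex structure J, and R a curvature-like tensor (satisfying the symmetries of a Riemann curvature tensor). Fix θ ∈ (0, π/2) and c ∈ ℝ. If for all unit vectors x,y with g(x,y) = g(x,Jy) = 0 one has R(Jx, x cos θ + y sin θ, x cos θ + y sin θ, Jx) = c, then R(x, Jx, Jx, y) = 0 for all such x,y. -/
open RealInnerProductSpace

section Curvature

variable {𝕜 M : Type*} [CommRing 𝕜] [AddCommGroup M] [Module 𝕜 M]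
  (R : M →ₗ[𝕜] M →ₗ[𝕜] M →ₗ[𝕜] M →ₗ[𝕜] 𝕜)

theorem curvature_swap_middle (hR1 : ∀ x y z u, R x y z u = - R y x z u)
    (hR2 : ∀ x y z u, R x y z u = - R x y u z) (hR3 : ∀ x y z u, R x y z u = R z u x y)
    (z a b : M) : R z b a z = R z a b z := by
  rw [hR3, hR1, hR2, neg_neg]

theorem curvature_add_sub_curvature_sub (hR1 : ∀ x y z u, R x y z u = - R y x z u)
    (hR2 : ∀ x y z u, R x y z u = - R x y u z) (hR3 : ∀ x y z u, R x y z u = R z u x y)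
    (z a b : M) (s t : 𝕜) :
    R z (s • a + t • b) (s • a + t • b) z - R z (s • a - t • b) (s • a - t • b) z =
      4 * (s * t) * R z a b z := by
  have hswap := curvature_swap_middle R hR1 hR2 hR3 z a b
  simp only [map_add, map_sub, map_smul, LinearMap.add_apply, LinearMap.sub_apply,
    LinearMap.smul_apply, smul_eq_mul, hswap]
  ring

end Curvature

theorem schur_step_eq2_general
    {V : Type*} [NormedAddCommGroup V] [InnerProductSpace ℝ V]
    (J : V →ₗ[ℝ] V)
    (R : V →ₗ[ℝ] V →ₗ[ℝ] V →ₗ[ℝ] V →ₗ[ℝ] ℝ)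
    (hR1 : ∀ x y z u, R x y z u = - R y x z u)
    (hR2 : ∀ x y z u, R x y z u = - R x y u z)
    (hR3 : ∀ x y z u, R x y z u = R z u x y)
    (θ : ℝ) (hθ : θ ∈ Set.Ioo 0 (Real.pi / 2)) (c : ℝ)
    (hc : ∀ x y : V, ‖x‖ = 1 → ‖y‖ = 1 → ⟪x, y⟫ = 0 → ⟪x, J y⟫ = 0 →
      R (J x) (Real.cos θ • x + Real.sin θ • y) (Real.cos θ • x + Real.sin θ • y) (J x) = c) :
    ∀ x y : V, ‖x‖ = 1 → ‖y‖ = 1 → ⟪x, y⟫ = 0 → ⟪x, J y⟫ = 0 →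
      R x (J x) (J x) y = 0 := by
  intro x y hx hy hxy hxJy
  -- The hypothesis also applies to the pair (x, -y); the difference isolates the cross term.
  have hplus := hc x y hx hy hxy hxJy
  have hminus := hc x (-y) hx (by rwa [norm_neg]) (by rw [inner_neg_right, hxy, neg_zero])
    (by rw [map_neg, inner_neg_right, hxJy, neg_zero])
  rw [smul_neg, ← sub_eq_add_neg] at hminus
  have hcross := curvature_add_sub_curvature_sub R hR1 hR2 hR3 (J x) x y (Real.cos θ) (Real.sin θ)
  rw [hplus, hminus, sub_self, hR1, hR2, neg_neg] at hcross
  have hcos : 0 < Real.cos θ := Real.cos_pos_of_mem_Ioo ⟨by linarith [hθ.1, Real.pi_pos], hθ.2⟩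
  have hsin : 0 < Real.sin θ := Real.sin_pos_of_pos_of_lt_pi hθ.1 (by linarith [hθ.2, Real.pi_pos])
  have hcoef : 4 * (Real.cos θ * Real.sin θ) ≠ 0 := by positivity
  exact (mul_eq_zero.mp hcross.symm).resolve_left hcoef

theorem schur_step_eq2
    {V : Type*} [NormedAddCommGroup V] [InnerProductSpace ℝ V] [FiniteDimensional ℝ V]
    (hdim : 4 ≤ Module.finrank ℝ V)
    (J : V →ₗ[ℝ] V) (hJ2 : ∀ x, J (J x) = -x) (hJg : ∀ x y, ⟪J x, J y⟫ = ⟪x, y⟫)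
    (R : V →ₗ[ℝ] V →ₗ[ℝ] V →ₗ[ℝ] V →ₗ[ℝ] ℝ)
    (hR1 : ∀ x y z u, R x y z u = - R y x z u)
    (hR2 : ∀ x y z u, R x y z u = - R x y u z)
    (hR3 : ∀ x y z u, R x y z u = R z u x y)
    (hBianchi : ∀ x y z u, R x y z u + R y z x u + R z x y u = 0)
    (θ : ℝ) (hθ : θ ∈ Set.Ioo 0 (Real.pi / 2)) (c : ℝ)
    (hc : ∀ x y : V, ‖x‖ = 1 → ‖y‖ = 1 → ⟪x, y⟫ = 0 → ⟪x, J y⟫ = 0 →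
      R (J x) (Real.cos θ • x + Real.sin θ • y) (Real.cos θ • x + Real.sin θ • y) (J x) = c) :
    ∀ x y : V, ‖x‖ = 1 → ‖y‖ = 1 → ⟪x, y⟫ = 0 → ⟪x, J y⟫ = 0 →
      R x (J x) (J x) y = 0 :=
  schur_step_eq2_general J R hR1 hR2 hR3 θ hθ c hc
end

section
/- Under the same setup, fix θ ∈ (0, π/2) and c ∈ ℝ. If R(Jx, x cos θ + y sin θ, x cos θ + y sin θ, Jx) = c for all unit x,y with g(x,y) = g(x,Jy) = 0, then R(x,Jx,Jx,x) cos²θ + R(Jx,y,y,Jx) sin²θ = c for all such x,y. -/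
open RealInnerProductSpace

lemma apply_diag_smul_add_smul_add_apply_diag_neg {K M : Type*} [CommRing K] [AddCommGroup M]
    [Module K M] (R : M →ₗ[K] M →ₗ[K] M →ₗ[K] M →ₗ[K] K) (a x y : M) (s t : K) :
    R a (s • x + t • y) (s • x + t • y) a + R a (s • x + t • -y) (s • x + t • -y) a =
      2 * (s ^ 2 * R a x x a + t ^ 2 * R a y y a) := by
  simp only [smul_neg, map_add, map_neg, map_smul, LinearMap.add_apply, LinearMap.neg_apply,
    LinearMap.smul_apply, smul_eq_mul]
  ring

theorem schur_step_eq3_general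
    {V : Type*} [NormedAddCommGroup V] [InnerProductSpace ℝ V]
    (J : V →ₗ[ℝ] V)
    (R : V →ₗ[ℝ] V →ₗ[ℝ] V →ₗ[ℝ] V →ₗ[ℝ] ℝ)
    (hR3 : ∀ x y z u, R x y z u = R z u x y)
    (θ : ℝ) (c : ℝ)
    (hc : ∀ x y : V, ‖x‖ = 1 → ‖y‖ = 1 → ⟪x, y⟫ = 0 → ⟪x, J y⟫ = 0 →
      R (J x) (Real.cos θ • x + Real.sin θ • y) (Real.cos θ • x + Real.sin θ • y) (J x) = c) :
    ∀ x y : V, ‖x‖ = 1 → ‖y‖ = 1 → ⟪x, y⟫ = 0 → ⟪x, J y⟫ = 0 →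
      R x (J x) (J x) x * (Real.cos θ)^2 + R (J x) y y (J x) * (Real.sin θ)^2 = c := by
  intro x y hx hy hxy hxJy
  have hplus := hc x y hx hy hxy hxJy
  have hminus := hc x (-y) hx (by rwa [norm_neg]) (by rwa [inner_neg_right, neg_eq_zero])
    (by rwa [map_neg, inner_neg_right, neg_eq_zero])
  have hsum := apply_diag_smul_add_smul_add_apply_diag_neg R (J x) x y (Real.cos θ) (Real.sin θ)
  rw [hR3 x (J x) (J x) x]
  linarith

theorem schur_step_eq3
    {V : Type*} [NormedAddCommGroup V] [InnerProductSpace ℝ V] [FiniteDimensional ℝ V]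
    (hdim : 4 ≤ Module.finrank ℝ V)
    (J : V →ₗ[ℝ] V) (hJ2 : ∀ x, J (J x) = -x) (hJg : ∀ x y, ⟪J x, J y⟫ = ⟪x, y⟫)
    (R : V →ₗ[ℝ] V →ₗ[ℝ] V →ₗ[ℝ] V →ₗ[ℝ] ℝ)
    (hR1 : ∀ x y z u, R x y z u = - R y x z u)
    (hR2 : ∀ x y z u, R x y z u = - R x y u z)
    (hR3 : ∀ x y z u, R x y z u = R z u x y)
    (hBianchi : ∀ x y z u, R x y z u + R y z x u + R z x y u = 0)
    (θ : ℝ) (hθ : θ ∈ Set.Ioo 0 (Real.pi / 2)) (c : ℝ)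
    (hc : ∀ x y : V, ‖x‖ = 1 → ‖y‖ = 1 → ⟪x, y⟫ = 0 → ⟪x, J y⟫ = 0 →
      R (J x) (Real.cos θ • x + Real.sin θ • y) (Real.cos θ • x + Real.sin θ • y) (J x) = c) :
    ∀ x y : V, ‖x‖ = 1 → ‖y‖ = 1 → ⟪x, y⟫ = 0 → ⟪x, J y⟫ = 0 →
      R x (J x) (J x) x * (Real.cos θ)^2 + R (J x) y y (J x) * (Real.sin θ)^2 = c :=
  schur_step_eq3_general J R hR3 θ c hc
end

section
/- Let V be a real inner product space with orthogonal almost complex structure J, S : V × V → ℝ a symmetric bilinear form, and define ψ(S)(x,y,z,u) = g(x,Ju)S(y,Jz) - g(x,Jz)S(y,Ju) - 2g(x,Jy)S(z,Ju) + g(y,Jz)S(x,Ju) - g(y,Ju)S(x,Jz) - 2g(z,Ju)S(x,Jy). If S(Jx,Jy) = S(x,y) for all x,y, then ψ(S) is a curvature-like tensor: antisymmetric in the first two and last two arguments, symmetric under pair exchange, and satisfying the first Bianchi identity. -/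
/-!
Because `J² = -1`, every symmetric `J`-invariant bilinear form `B` yields a skew form `B(·, J·)`.
Both `g` and `S` are such forms and `ψ(S)` is built from products of the two skew forms, so once
every factor is written with its arguments in a fixed order, each curvature identity is a ring
identity.
-/

open RealInnerProductSpace

noncomputable def psi {V : Type*} [NormedAddCommGroup V] [InnerProductSpace ℝ V]
    (J : V →ₗ[ℝ] V) (S : V →ₗ[ℝ] V →ₗ[ℝ] ℝ) : V → V → V → V → ℝ :=
  fun x y z u =>
    ⟪x, J u⟫ * S y (J z) - ⟪x, J z⟫ * S y (J u) - 2 * ⟪x, J y⟫ * S z (J u)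
    + ⟪y, J z⟫ * S x (J u) - ⟪y, J u⟫ * S x (J z) - 2 * ⟪z, J u⟫ * S x (J y)

theorem LinearMap.apply_map_eq_neg_apply_map_of_invariant {R M N : Type*} [CommRing R]
    [AddCommGroup M] [Module R M] [AddCommGroup N] [Module R N]
    (B : M →ₗ[R] M →ₗ[R] N) (J : M →ₗ[R] M) (hJ2 : ∀ x, J (J x) = -x)
    (hB : ∀ x y, B x y = B y x) (hBJ : ∀ x y, B (J x) (J y) = B x y) (a b : M) :
    B a (J b) = -B b (J a) :=
  calc B a (J b) = B (J a) (J (J b)) := (hBJ a (J b)).symm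
    _ = -B b (J a) := by rw [hJ2, map_neg, hB]

section psi

variable {V : Type*} [NormedAddCommGroup V] [InnerProductSpace ℝ V]
  {J : V →ₗ[ℝ] V} {S : V →ₗ[ℝ] V →ₗ[ℝ] ℝ}

theorem psi_swap_left (hg : ∀ a b : V, ⟪a, J b⟫ = -⟪b, J a⟫)
    (hS : ∀ a b, S a (J b) = -S b (J a)) (x y z u : V) :
    psi J S x y z u = -psi J S y x z u := by
  simp only [psi, hg y x, hS y x]
  ring

theorem psi_swap_right (hg : ∀ a b : V, ⟪a, J b⟫ = -⟪b, J a⟫)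
    (hS : ∀ a b, S a (J b) = -S b (J a)) (x y z u : V) :
    psi J S x y z u = -psi J S x y u z := by
  simp only [psi, hg u z, hS u z]
  ring

theorem psi_pair_swap (hg : ∀ a b : V, ⟪a, J b⟫ = -⟪b, J a⟫)
    (hS : ∀ a b, S a (J b) = -S b (J a)) (x y z u : V) :
    psi J S x y z u = psi J S z u x y := by
  simp only [psi, hg z y, hg z x, hg u x, hg u y, hS u x, hS u y, hS z y, hS z x]
  ring

theorem psi_bianchi (hg : ∀ a b : V, ⟪a, J b⟫ = -⟪b, J a⟫)
    (hS : ∀ a b, S a (J b) = -S b (J a)) (x y z u : V) :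
    psi J S x y z u + psi J S y z x u + psi J S z x y u = 0 := by
  simp only [psi, hg y x, hg z x, hg z y, hS y x, hS z x, hS z y]
  ring

end psi

theorem psi_curvature_like_general
    {V : Type*} [NormedAddCommGroup V] [InnerProductSpace ℝ V]
    (J : V →ₗ[ℝ] V) (hJ2 : ∀ x, J (J x) = -x) (hJg : ∀ x y, ⟪J x, J y⟫ = ⟪x, y⟫)
    (S : V →ₗ[ℝ] V →ₗ[ℝ] ℝ) (hSsymm : ∀ x y, S x y = S y x)
    (hSJ : ∀ x y, S (J x) (J y) = S x y) :
    (∀ x y z u : V, psi J S x y z u = - psi J S y x z u) ∧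
    (∀ x y z u : V, psi J S x y z u = - psi J S x y u z) ∧
    (∀ x y z u : V, psi J S x y z u = psi J S z u x y) ∧
    (∀ x y z u : V, psi J S x y z u + psi J S y z x u + psi J S z x y u = 0) := by
  have hg : ∀ a b : V, ⟪a, J b⟫ = -⟪b, J a⟫ :=
    (innerₗ V).apply_map_eq_neg_apply_map_of_invariant J hJ2 (fun x y => real_inner_comm y x) hJg
  have hS : ∀ a b, S a (J b) = -S b (J a) :=
    S.apply_map_eq_neg_apply_map_of_invariant J hJ2 hSsymm hSJ
  exact ⟨psi_swap_left hg hS, psi_swap_right hg hS, psi_pair_swap hg hS, psi_bianchi hg hS⟩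

theorem psi_curvature_like
    {V : Type*} [NormedAddCommGroup V] [InnerProductSpace ℝ V] [FiniteDimensional ℝ V]
    (J : V →ₗ[ℝ] V) (hJ2 : ∀ x, J (J x) = -x) (hJg : ∀ x y, ⟪J x, J y⟫ = ⟪x, y⟫)
    (S : V →ₗ[ℝ] V →ₗ[ℝ] ℝ) (hSsymm : ∀ x y, S x y = S y x)
    (hSJ : ∀ x y, S (J x) (J y) = S x y) :
    (∀ x y z u : V, psi J S x y z u = - psi J S y x z u) ∧
    (∀ x y z u : V, psi J S x y z u = - psi J S x y u z) ∧
    (∀ x y z u : V, psi J S x y z u = psi J S z u x y) ∧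
    (∀ x y z u : V, psi J S x y z u + psi J S y z x u + psi J S z x y u = 0) :=
  psi_curvature_like_general J hJ2 hJg S hSsymm hSJ
end

section
/- Let V be a real inner product space of dimension 2m ≥ 6 with orthogonal almost complex structure J. For every unit vector x, there exist unit vectors y, z such that {x, y, z} is an antiholomorphic triple: x, y, z are mutually orthogonal and g(x,Jy) = g(y,Jz) = g(z,Jx) = 0. -/
/-! Since `⟪a, J b⟫ = ⟪J† a, b⟫`, every condition on `y` or `z` is orthogonality to one vector:
`y` must lie in the orthogonal complement of `x, J† x`, and `z` in that of `x, y, J x, J† y`.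
Both complements are nonzero once `dim V > 4`. -/

open RealInnerProductSpace

section

variable {𝕜 E : Type*} [RCLike 𝕜] [NormedAddCommGroup E] [InnerProductSpace 𝕜 E]
  [FiniteDimensional 𝕜 E]

theorem exists_norm_eq_one_forall_inner_eq_zero {k : ℕ} (v : Fin k → E)
    (hk : k < Module.finrank 𝕜 E) : ∃ u : E, ‖u‖ = 1 ∧ ∀ i, inner 𝕜 (v i) u = 0 := by
  set W := Submodule.span 𝕜 (Set.range v)
  have hW : Module.finrank 𝕜 W ≤ k :=
    (finrank_range_le_card (R := 𝕜) v).trans_eq (Fintype.card_fin k)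
  have hWperp : 0 < Module.finrank 𝕜 Wᗮ := by
    have := W.finrank_add_finrank_orthogonal
    omega
  obtain ⟨⟨w, hw⟩, hw_ne⟩ := Module.finrank_pos_iff_exists_ne_zero.mp hWperp
  have hw0 : w ≠ 0 := fun h => hw_ne (Subtype.ext h)
  refine ⟨(‖w‖⁻¹ : 𝕜) • w, norm_smul_inv_norm hw0, fun i => ?_⟩
  rw [inner_smul_right, (W.mem_orthogonal w).mp hw _ (Submodule.subset_span ⟨i, rfl⟩), mul_zero]

theorem LinearMap.exists_orthogonal_triple_inner_apply_eq_zero (T : E →ₗ[𝕜] E)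
    (hdim : 4 < Module.finrank 𝕜 E) (x : E) :
    ∃ y z : E, ‖y‖ = 1 ∧ ‖z‖ = 1 ∧
      inner 𝕜 x y = 0 ∧ inner 𝕜 y z = 0 ∧ inner 𝕜 z x = 0 ∧
      inner 𝕜 x (T y) = 0 ∧ inner 𝕜 y (T z) = 0 ∧ inner 𝕜 z (T x) = 0 := by
  obtain ⟨y, hy, hy0⟩ :=
    exists_norm_eq_one_forall_inner_eq_zero (𝕜 := 𝕜) ![x, T.adjoint x] (by omega)
  obtain ⟨z, hz, hz0⟩ :=
    exists_norm_eq_one_forall_inner_eq_zero ![x, y, T x, T.adjoint y] hdim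
  refine ⟨y, z, hy, hz, hy0 0, hz0 1, inner_eq_zero_symm.mp (hz0 0), ?_, ?_,
    inner_eq_zero_symm.mp (hz0 2)⟩
  · rw [← T.adjoint_inner_left]
    exact hy0 1
  · rw [← T.adjoint_inner_left]
    exact hz0 3

end

theorem exists_antiholomorphic_triple_general
    {V : Type*} [NormedAddCommGroup V] [InnerProductSpace ℝ V] [FiniteDimensional ℝ V]
    (m : ℕ) (hdim : Module.finrank ℝ V = 2 * m) (hm : 6 ≤ 2 * m)
    (J : V →ₗ[ℝ] V) :
    ∀ x : V, ‖x‖ = 1 → ∃ y z : V, ‖y‖ = 1 ∧ ‖z‖ = 1 ∧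
      ⟪x, y⟫ = 0 ∧ ⟪y, z⟫ = 0 ∧ ⟪z, x⟫ = 0 ∧
      ⟪x, J y⟫ = 0 ∧ ⟪y, J z⟫ = 0 ∧ ⟪z, J x⟫ = 0 :=
  fun x _ => J.exists_orthogonal_triple_inner_apply_eq_zero (by omega) x

theorem exists_antiholomorphic_triple
    {V : Type*} [NormedAddCommGroup V] [InnerProductSpace ℝ V] [FiniteDimensional ℝ V]
    (m : ℕ) (hdim : Module.finrank ℝ V = 2 * m) (hm : 6 ≤ 2 * m)
    (J : V →ₗ[ℝ] V) (hJ2 : ∀ x, J (J x) = -x) (hJg : ∀ x y, ⟪J x, J y⟫ = ⟪x, y⟫) :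
    ∀ x : V, ‖x‖ = 1 → ∃ y z : V, ‖y‖ = 1 ∧ ‖z‖ = 1 ∧
      ⟪x, y⟫ = 0 ∧ ⟪y, z⟫ = 0 ∧ ⟪z, x⟫ = 0 ∧
      ⟪x, J y⟫ = 0 ∧ ⟪y, J z⟫ = 0 ∧ ⟪z, J x⟫ = 0 :=
  exists_antiholomorphic_triple_general m hdim hm J
end
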